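/- If three matrix norms ‖·‖ on m×n, n×p, m×p real matrices are mutually consistent (‖XY‖ ≤ ‖X‖‖Y‖), then their dual continuations ‖A_s + A_i ε‖ := ‖A_s‖ + D_{A_i}‖A_s‖ ε (with ‖A_i‖ε when A_s = 0) satisfy ‖AB‖ ≤ ‖A‖‖B‖ for all dual matrices A ∈ DR^{m×n}, B ∈ DR^{n×p}, in the lexicographic order on dual numbers. -/

import Mathlib

open Filter Topology

/-- A norm on a real vector space. -/
def IsNorm {α : Type*} [AddCommGroup α] [Module ℝ α] (N : α → ℝ) : Prop :=
  (∀ x y, N (x + y) ≤ N x + N y) ∧ (∀ (c : ℝ) (x : α), N (c • x) = |c| * N x) ∧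
    (∀ x, N x = 0 → x = 0)

/-- Lexicographic order on dual numbers represented as pairs. -/
def dualLe (p q : ℝ × ℝ) : Prop := p.1 < q.1 ∨ (p.1 = q.1 ∧ p.2 ≤ q.2)

/-- Product of dual numbers. -/
def dualMul (p q : ℝ × ℝ) : ℝ × ℝ := (p.1 * q.1, p.1 * q.2 + p.2 * q.1)

open Classical in
/-- Dual continuation of a matrix norm `N` with directional derivative `D`:
`‖A_s + A_i ε‖ = ‖A_s‖ + D_{A_i}‖A_s‖ ε`, and `‖A_i‖ε` when `A_s = 0`. -/
noncomputable def dualContinuation {α : Type*} [AddCommGroup α] [Module ℝ α]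
    (N : α → ℝ) (D : α → α → ℝ) (A : α × α) : ℝ × ℝ :=
  if A.1 = 0 then (0, N A.2) else (N A.1, D A.1 A.2)

/-!
The first coordinates compare by consistency, and when they differ the lexicographic order
is decided there. When they agree, `N₃(A_s B_s) = N₁(A_s) N₂(B_s)`, so `t = 0` is a point
of equality in the inequality, valid for all `t`,
`N₃(A_s B_s + t (A_s B_i + A_i B_s)) ≤ N₁(A_s + t A_i) N₂(B_s + t B_i) + t² N₃(A_i B_i)`,
obtained from consistency applied to `(A_s + t A_i)(B_s + t B_i)`; comparing right
derivatives at `t = 0` gives the inequality of the `ε`-parts.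
-/

open Set

namespace IsNorm

variable {α : Type*} [AddCommGroup α] [Module ℝ α] {N : α → ℝ}

lemma map_zero (h : IsNorm N) : N 0 = 0 := by
  simpa using h.2.1 0 0

lemma map_neg (h : IsNorm N) (x : α) : N (-x) = N x := by
  simpa using h.2.1 (-1) x

lemma nonneg (h : IsNorm N) (x : α) : 0 ≤ N x := by
  have := h.1 x (-x)
  rw [add_neg_cancel, h.map_zero, h.map_neg] at this
  linarith

lemma pos (h : IsNorm N) {x : α} (hx : x ≠ 0) : 0 < N x :=
  (h.nonneg x).lt_of_ne fun h0 => hx (h.2.2 x h0.symm)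

lemma le_map_add_add (h : IsNorm N) (x y : α) : N x ≤ N (x + y) + N y := by
  simpa [h.map_neg] using h.1 (x + y) (-y)

end IsNorm

section DualContinuation

variable {α : Type*} [AddCommGroup α] [Module ℝ α] {N : α → ℝ} (D : α → α → ℝ)

lemma dualContinuation_of_eq_zero {X : α} (Y : α) (hX : X = 0) :
    dualContinuation N D (X, Y) = (0, N Y) :=
  if_pos hX

lemma dualContinuation_of_ne_zero {X : α} (Y : α) (hX : X ≠ 0) :
    dualContinuation N D (X, Y) = (N X, D X Y) :=
  if_neg hX

lemma dualContinuation_fst (hN : IsNorm N) (A : α × α) : (dualContinuation N D A).1 = N A.1 := by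
  by_cases h : A.1 = 0
  · rw [dualContinuation_of_eq_zero D A.2 h, h, hN.map_zero]
  · rw [dualContinuation_of_ne_zero D A.2 h]

end DualContinuation

lemma hasDerivWithinAt_of_tendsto_div {α : Type*} [AddCommGroup α] [Module ℝ α]
    {N : α → ℝ} {X Y : α} {d : ℝ}
    (h : Tendsto (fun t : ℝ => (N (X + t • Y) - N X) / t) (𝓝[>] 0) (𝓝 d)) :
    HasDerivWithinAt (fun t : ℝ => N (X + t • Y)) d (Ioi 0) 0 := by
  rw [hasDerivWithinAt_iff_tendsto_slope' self_notMem_Ioi]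
  simpa [slope_fun_def_field] using h

lemma HasDerivWithinAt.le_of_eventually_le_of_eq {f g : ℝ → ℝ} {a b x : ℝ}
    (hf : HasDerivWithinAt f a (Ioi x) x) (hg : HasDerivWithinAt g b (Ioi x) x)
    (hfg : ∀ᶠ t in 𝓝[>] x, f t ≤ g t) (hx : f x = g x) : a ≤ b := by
  rw [hasDerivWithinAt_iff_tendsto_slope' self_notMem_Ioi] at hf hg
  refine le_of_tendsto_of_tendsto hf hg ?_
  filter_upwards [hfg, self_mem_nhdsWithin] with t hle ht
  rw [slope_def_field, slope_def_field, hx]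
  have : 0 < t - x := sub_pos.mpr ht
  gcongr

section Consistent

variable {l m n : Type*} [Fintype m]
  {N₁ : Matrix l m ℝ → ℝ} {N₂ : Matrix m n ℝ → ℝ} {N₃ : Matrix l n ℝ → ℝ}

lemma map_mul_add_smul_le (hN₃ : IsNorm N₃)
    (hcons : ∀ X Y, N₃ (X * Y) ≤ N₁ X * N₂ Y)
    (As Ai : Matrix l m ℝ) (Bs Bi : Matrix m n ℝ) (t : ℝ) :
    N₃ (As * Bs + t • (As * Bi + Ai * Bs)) ≤
      N₁ (As + t • Ai) * N₂ (Bs + t • Bi) + t ^ 2 * N₃ (Ai * Bi) := by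
  have hexpand : (As + t • Ai) * (Bs + t • Bi) =
      As * Bs + t • (As * Bi + Ai * Bs) + t ^ 2 • (Ai * Bi) := by
    simp only [Matrix.add_mul, Matrix.mul_add, Matrix.smul_mul, Matrix.mul_smul, smul_smul,
      smul_add, sq]
    abel
  calc N₃ (As * Bs + t • (As * Bi + Ai * Bs))
      ≤ N₃ ((As + t • Ai) * (Bs + t • Bi)) + N₃ (t ^ 2 • (Ai * Bi)) := by
        rw [hexpand]; exact hN₃.le_map_add_add _ _
    _ ≤ N₁ (As + t • Ai) * N₂ (Bs + t • Bi) + t ^ 2 * N₃ (Ai * Bi) := by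
        rw [hN₃.2.1, abs_of_nonneg (sq_nonneg t)]
        gcongr
        exact hcons _ _

lemma dirDeriv_mul_le_of_map_mul_eq {D₁ : Matrix l m ℝ → Matrix l m ℝ → ℝ}
    {D₂ : Matrix m n ℝ → Matrix m n ℝ → ℝ} {D₃ : Matrix l n ℝ → Matrix l n ℝ → ℝ}
    (hN₃ : IsNorm N₃) (hcons : ∀ X Y, N₃ (X * Y) ≤ N₁ X * N₂ Y)
    {As Ai : Matrix l m ℝ} {Bs Bi : Matrix m n ℝ}
    (hD₁ : Tendsto (fun t : ℝ => (N₁ (As + t • Ai) - N₁ As) / t) (𝓝[>] 0) (𝓝 (D₁ As Ai)))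
    (hD₂ : Tendsto (fun t : ℝ => (N₂ (Bs + t • Bi) - N₂ Bs) / t) (𝓝[>] 0) (𝓝 (D₂ Bs Bi)))
    (hD₃ : Tendsto (fun t : ℝ => (N₃ (As * Bs + t • (As * Bi + Ai * Bs)) - N₃ (As * Bs)) / t)
      (𝓝[>] 0) (𝓝 (D₃ (As * Bs) (As * Bi + Ai * Bs))))
    (heq : N₃ (As * Bs) = N₁ As * N₂ Bs) :
    D₃ (As * Bs) (As * Bi + Ai * Bs) ≤ N₁ As * D₂ Bs Bi + D₁ As Ai * N₂ Bs := by
  have hsq : HasDerivWithinAt (fun t : ℝ => t ^ 2 * N₃ (Ai * Bi)) 0 (Ioi 0) 0 := by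
    simpa using ((hasDerivAt_pow 2 (0 : ℝ)).mul_const (N₃ (Ai * Bi))).hasDerivWithinAt
  have hbound : HasDerivWithinAt
      (fun t : ℝ => N₁ (As + t • Ai) * N₂ (Bs + t • Bi) + t ^ 2 * N₃ (Ai * Bi))
      (N₁ As * D₂ Bs Bi + D₁ As Ai * N₂ Bs) (Ioi 0) 0 := by
    refine (((hasDerivWithinAt_of_tendsto_div hD₁).fun_mul
      (hasDerivWithinAt_of_tendsto_div hD₂)).fun_add hsq).congr_deriv ?_
    simp only [zero_smul, add_zero]
    ring
  exact (hasDerivWithinAt_of_tendsto_div hD₃).le_of_eventually_le_of_eq hbound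
    (Eventually.of_forall (map_mul_add_smul_le hN₃ hcons As Ai Bs Bi)) (by simp [heq])

end Consistent

/-- If three matrix norms (on `m×n`, `n×p`, `m×p` real matrices) are mutually
consistent, then their dual continuations satisfy `‖AB‖ ≤ ‖A‖‖B‖` for all dual
matrices `A`, `B` (dual product `AB = A_s B_s + (A_s B_i + A_i B_s)ε`), in the
lexicographic order on dual numbers. -/
theorem dual_matrix_norms_mutually_consistent {m n p : ℕ}
    (N1 : Matrix (Fin m) (Fin n) ℝ → ℝ) (N2 : Matrix (Fin n) (Fin p) ℝ → ℝ)
    (N3 : Matrix (Fin m) (Fin p) ℝ → ℝ)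
    (hN1 : IsNorm N1) (hN2 : IsNorm N2) (hN3 : IsNorm N3)
    (hcons : ∀ (X : Matrix (Fin m) (Fin n) ℝ) (Y : Matrix (Fin n) (Fin p) ℝ),
      N3 (X * Y) ≤ N1 X * N2 Y)
    (D1 : Matrix (Fin m) (Fin n) ℝ → Matrix (Fin m) (Fin n) ℝ → ℝ)
    (D2 : Matrix (Fin n) (Fin p) ℝ → Matrix (Fin n) (Fin p) ℝ → ℝ)
    (D3 : Matrix (Fin m) (Fin p) ℝ → Matrix (Fin m) (Fin p) ℝ → ℝ)
    (hD1 : ∀ X Y, Tendsto (fun t : ℝ => (N1 (X + t • Y) - N1 X) / t) (𝓝[>] 0)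
      (𝓝 (D1 X Y)))
    (hD2 : ∀ X Y, Tendsto (fun t : ℝ => (N2 (X + t • Y) - N2 X) / t) (𝓝[>] 0)
      (𝓝 (D2 X Y)))
    (hD3 : ∀ X Y, Tendsto (fun t : ℝ => (N3 (X + t • Y) - N3 X) / t) (𝓝[>] 0)
      (𝓝 (D3 X Y)))
    (As Ai : Matrix (Fin m) (Fin n) ℝ) (Bs Bi : Matrix (Fin n) (Fin p) ℝ) :
    dualLe (dualContinuation N3 D3 (As * Bs, As * Bi + Ai * Bs))
      (dualMul (dualContinuation N1 D1 (As, Ai)) (dualContinuation N2 D2 (Bs, Bi))) := by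
  simp only [dualLe, dualMul, dualContinuation_fst _ hN1, dualContinuation_fst _ hN2,
    dualContinuation_fst _ hN3]
  rcases (hcons As Bs).lt_or_eq with hlt | heq
  · exact Or.inl hlt
  refine Or.inr ⟨heq, ?_⟩
  by_cases hAs : As = 0
  · subst hAs
    simpa [dualContinuation_of_eq_zero, hN1.map_zero] using hcons Ai Bs
  by_cases hBs : Bs = 0
  · subst hBs
    simpa [dualContinuation_of_eq_zero, hN2.map_zero] using hcons As Bi
  have hAB : As * Bs ≠ 0 := by
    intro h
    rw [h, hN3.map_zero] at heq
    exact (mul_pos (hN1.pos hAs) (hN2.pos hBs)).ne heq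
  rw [dualContinuation_of_ne_zero D3 _ hAB, dualContinuation_of_ne_zero D1 Ai hAs,
    dualContinuation_of_ne_zero D2 Bi hBs]
  exact dirDeriv_mul_le_of_map_mul_eq hN3 hcons (hD1 As Ai) (hD2 Bs Bi) (hD3 _ _) heq
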